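/- Let ω, σ be doubling measures on ℝⁿ with doubling constants K_ω, K_σ and reverse doubling constants 1+δ_ω, 1+δ_σ respectively. If K_σ < 2^p(1+δ_ω), then finiteness of the classical two-weight A_p constant implies the pivotal condition: for every cube I_0 and disjoint decomposition I_0 = ∪_r I_r, ∑_r ω(I_r) P(I_r, 1_{I_0}σ)^p ≤ C · A_p(ω,σ) · σ(I_0). -/

import Mathlib

open MeasureTheory ENNReal

structure Cube (n : ℕ) where
  c : Fin n → ℝ
  r : ℝ
  hr : 0 < r

namespace Cube

def set {n : ℕ} (I : Cube n) : Set (Fin n → ℝ) :=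
  {x | ∀ i, I.c i - I.r ≤ x i ∧ x i < I.c i + I.r}

noncomputable def side {n : ℕ} (I : Cube n) : ℝ := 2 * I.r

noncomputable def vol {n : ℕ} (I : Cube n) : ℝ := (2 * I.r) ^ n

def double {n : ℕ} (I : Cube n) : Cube n := ⟨I.c, 2 * I.r, by have := I.hr; linarith⟩

def triple {n : ℕ} (I : Cube n) : Cube n := ⟨I.c, 3 * I.r, by have := I.hr; linarith⟩

end Cube

noncomputable def poisson {n : ℕ} (I : Cube n) (ω : Measure (Fin n → ℝ)) : ℝ≥0∞ :=
  ∫⁻ x, (ENNReal.ofReal (I.side / (I.side + Metric.infDist x I.set) ^ 2)) ^ n ∂ω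

noncomputable def maximal {n : ℕ} (μ : Measure (Fin n → ℝ)) (x : Fin n → ℝ) : ℝ≥0∞ :=
  ⨆ (I : Cube n) (_ : x ∈ I.set), μ I.set / ENNReal.ofReal I.vol

noncomputable def wMass {n : ℕ} (w : (Fin n → ℝ) → ℝ≥0∞) (E : Set (Fin n → ℝ)) : ℝ≥0∞ :=
  ∫⁻ x in E, w x


/-- A dyadic cube `∏ᵢ [posᵢ 2ᵏ, (posᵢ+1) 2ᵏ)` in `ℝⁿ`. -/
structure DyadicCube (n : ℕ) where
  k : ℤ
  pos : Fin n → ℤ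

namespace DyadicCube

def set {n : ℕ} (D : DyadicCube n) : Set (Fin n → ℝ) :=
  {x | ∀ i, (D.pos i : ℝ) * (2:ℝ) ^ D.k ≤ x i ∧ x i < ((D.pos i : ℝ) + 1) * (2:ℝ) ^ D.k}

noncomputable def vol {n : ℕ} (D : DyadicCube n) : ℝ := ((2:ℝ) ^ D.k) ^ n

end DyadicCube

/-- The dyadic maximal function of a measure. -/
noncomputable def dyadicMaximal {n : ℕ} (μ : Measure (Fin n → ℝ)) (x : Fin n → ℝ) : ℝ≥0∞ :=
  ⨆ (D : DyadicCube n) (_ : x ∈ D.set), μ D.set / ENNReal.ofReal D.vol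

/-- The classical two-weight `A_p` characteristic. -/
noncomputable def Ap {n : ℕ} (p : ℝ) (ω σ : Measure (Fin n → ℝ)) : ℝ≥0∞ :=
  ⨆ I : Cube n, (ω I.set / ENNReal.ofReal I.vol) ^ (1 / p) *
    (σ I.set / ENNReal.ofReal I.vol) ^ (1 - 1 / p)

/-- The `A_∞` condition for a measure: `σ(E)/σ(I) ≤ C (|E|/|I|)^ε`. -/
def IsAInfty {n : ℕ} (σ : Measure (Fin n → ℝ)) : Prop :=
  ∃ C > (0:ℝ), ∃ ε > (0:ℝ), ∀ I : Cube n, ∀ E : Set (Fin n → ℝ),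
    E ⊆ I.set → MeasurableSet E →
    σ E ≤ ENNReal.ofReal (C * ((volume E).toReal / I.vol) ^ ε) * σ I.set

/-!
On the annulus `2^{m+1}I ∖ 2^m I` the Poisson kernel of `I` is at most `8ⁿ 2^{-mn} / |J_m|`,
where `J_m = 2^{m+1}I`, so `P(I, σ) ≤ ∑ₘ 8ⁿ 2^{-mn} σ(J_m)/|J_m|`. Reverse doubling of `ω` and
doubling of `σ` transport both measures between `I` and `J_m`, and the `A_p` condition on `J_m`
gives `ω(I)^{1/p} σ(J_m)/|J_m| ≤ θ^{m+1} A_p(ω,σ) σ(I)^{1/p}` with `θ = (K_σ/(1+δ_ω))^{1/p} < 2`.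
The series is therefore geometric with ratio `θ/2ⁿ < 1`, whence `ω(I) P(I,σ)^p ≤ C A_p^p σ(I)`
for every cube; summing over the cubes `I_r` of a partition of `I₀` gives the pivotal condition.
-/
namespace Cube

variable {n : ℕ}

theorem measurableSet_set (I : Cube n) : MeasurableSet I.set := by
  have : I.set = ⋂ i, (fun x : Fin n → ℝ => x i) ⁻¹' Set.Ico (I.c i - I.r) (I.c i + I.r) := by
    ext x; simp [Cube.set]
  rw [this]
  exact .iInter fun i => measurable_pi_apply i measurableSet_Ico

@[simp]
theorem iterate_double_c (I : Cube n) (m : ℕ) : (double^[m] I).c = I.c := by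
  induction m with
  | zero => rfl
  | succ m ih => rw [Function.iterate_succ_apply']; exact ih

@[simp]
theorem iterate_double_r (I : Cube n) (m : ℕ) : (double^[m] I).r = 2 ^ m * I.r := by
  induction m with
  | zero => simp
  | succ m ih =>
    rw [Function.iterate_succ_apply', pow_succ, mul_comm _ (2 : ℝ), mul_assoc, ← ih]; rfl

theorem exists_mem_iterate_double (I : Cube n) (x : Fin n → ℝ) :
    ∃ m, x ∈ (double^[m] I).set := by
  obtain ⟨m, hm⟩ := pow_unbounded_of_one_lt (dist x I.c / I.r) (one_lt_two (α := ℝ))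
  rw [div_lt_iff₀ I.hr] at hm
  refine ⟨m, fun i => ?_⟩
  have hi := (Real.dist_eq _ _ ▸ dist_le_pi_dist x I.c i : |x i - I.c i| ≤ dist x I.c)
  rw [abs_le] at hi
  simp only [iterate_double_c, iterate_double_r]
  constructor <;> linarith

theorem le_infDist_of_notMem_iterate_double (I : Cube n) {m : ℕ} {x : Fin n → ℝ}
    (hx : x ∉ (double^[m] I).set) : (2 ^ m - 1) * I.r ≤ Metric.infDist x I.set := by
  by_contra! h
  have hI : I.set.Nonempty := ⟨I.c, fun i => ⟨by linarith [I.hr], by linarith [I.hr]⟩⟩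
  obtain ⟨y, hy, hxy⟩ := (Metric.infDist_lt_iff hI).mp h
  refine hx fun i => ?_
  have hi := (Real.dist_eq _ _ ▸ dist_le_pi_dist x y i : |x i - y i| ≤ dist x y)
  rw [abs_le] at hi
  have h2m : (1 : ℝ) ≤ 2 ^ m := one_le_pow₀ one_le_two
  simp only [iterate_double_c, iterate_double_r]
  constructor <;> nlinarith [hy i, I.hr]

end Cube

theorem two_mul_div_two_mul_add_sq_le {r d : ℝ} (hr : 0 < r) {m : ℕ} (hd : (2 ^ m - 1) * r ≤ d) :
    2 * r / (2 * r + d) ^ 2 ≤ 8 / 2 ^ m / (2 ^ (m + 2) * r) := by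
  have h2m : (0 : ℝ) < 2 ^ m * r := by positivity
  calc 2 * r / (2 * r + d) ^ 2 ≤ 2 * r / (2 ^ m * r) ^ 2 := by gcongr; linarith
    _ = 8 / 2 ^ m / (2 ^ (m + 2) * r) := by field_simp; ring

theorem poisson_le_tsum_average {n : ℕ} (I : Cube n) (μ : Measure (Fin n → ℝ)) :
    poisson I μ ≤ ∑' m : ℕ, ENNReal.ofReal ((8 / 2 ^ m) ^ n) *
      (μ (Cube.double^[m + 1] I).set / ENNReal.ofReal (Cube.double^[m + 1] I).vol) := by
  classical
  set J : ℕ → Cube n := fun m => Cube.double^[m + 1] I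
  set a : ℕ → ℝ≥0∞ := fun m => ENNReal.ofReal ((8 / 2 ^ m) ^ n) / ENNReal.ofReal (J m).vol
  have hr := I.hr
  have hvol : ∀ m, (J m).vol = (2 ^ (m + 2) * I.r) ^ n := fun m => by
    simp only [J, Cube.vol, Cube.iterate_double_r]; ring
  have hkernel : ∀ x,
      ENNReal.ofReal (I.side / (I.side + Metric.infDist x I.set) ^ 2) ^ n ≤
        ∑' m, (J m).set.indicator (fun _ => a m) x := by
    intro x
    have hex : ∃ m, x ∈ (J m).set := I.double.exists_mem_iterate_double x
    -- `x` lies in `J m = 2^{m+1}I` but, by minimality of `m`, not in `2^m I` unless `m = 0`.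
    set m := Nat.find hex
    have hd : (2 ^ m - 1) * I.r ≤ Metric.infDist x I.set := by
      rcases Nat.eq_zero_or_eq_succ_pred m with h0 | h
      · simp [h0, Metric.infDist_nonneg]
      · exact I.le_infDist_of_notMem_iterate_double
          (h ▸ Nat.find_min hex (Nat.pred_lt (by omega)))
    calc ENNReal.ofReal (I.side / (I.side + Metric.infDist x I.set) ^ 2) ^ n
        ≤ a m := by
          have hdist := two_mul_div_two_mul_add_sq_le I.hr hd
          simp only [a, Cube.side, hvol]
          rw [← ENNReal.ofReal_pow (by positivity), ← ENNReal.ofReal_div_of_pos (by positivity),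
            ← div_pow]
          gcongr
      _ = (J m).set.indicator (fun _ => a m) x :=
          (Set.indicator_of_mem (Nat.find_spec hex) (fun _ => a m)).symm
      _ ≤ _ := ENNReal.le_tsum m
  calc poisson I μ ≤ ∫⁻ x, ∑' m, (J m).set.indicator (fun _ => a m) x ∂μ :=
        lintegral_mono hkernel
    _ = ∑' m, a m * μ (J m).set := by
      rw [lintegral_tsum fun m => (aemeasurable_const.indicator (J m).measurableSet_set)]
      simp only [lintegral_indicator_const (J _).measurableSet_set]
    _ = _ := by congr 1 with m; simp only [a, ENNReal.div_eq_inv_mul]; ring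

theorem ENNReal.div_rpow_mul_div_rpow_mul_rpow {a b c : ℝ≥0∞} {s : ℝ} (hs₀ : 0 ≤ s)
    (hs₁ : s ≤ 1) :
    (a / c) ^ s * (b / c) ^ (1 - s) * b ^ s = a ^ s * (b / c) := by
  simp only [div_eq_mul_inv]
  rw [ENNReal.mul_rpow_of_nonneg _ _ hs₀, ENNReal.mul_rpow_of_nonneg _ _ (sub_nonneg.2 hs₁)]
  calc a ^ s * c⁻¹ ^ s * (b ^ (1 - s) * c⁻¹ ^ (1 - s)) * b ^ s
      = a ^ s * (b ^ (1 - s) * b ^ s) * (c⁻¹ ^ s * c⁻¹ ^ (1 - s)) := by ring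
    _ = a ^ s * (b * c⁻¹) := by
      rw [← ENNReal.rpow_add_of_nonneg _ _ (sub_nonneg.2 hs₁) hs₀,
        ← ENNReal.rpow_add_of_nonneg _ _ hs₀ (sub_nonneg.2 hs₁)]
      simp [mul_assoc]

section Weights

variable {n : ℕ} {p : ℝ} {ω σ : Measure (Fin n → ℝ)}

theorem rpow_mul_average_le_Ap (hp : 1 ≤ p) (J : Cube n) :
    ω J.set ^ (1 / p) * (σ J.set / ENNReal.ofReal J.vol) ≤ Ap p ω σ * σ J.set ^ (1 / p) := by
  have hs₁ : 1 / p ≤ 1 := by rw [div_le_one (by linarith)]; exact hp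
  have hs₀ : 0 ≤ 1 / p := by positivity
  rw [← ENNReal.div_rpow_mul_div_rpow_mul_rpow hs₀ hs₁]
  gcongr
  exact le_iSup (fun I : Cube n => (ω I.set / ENNReal.ofReal I.vol) ^ (1 / p) *
    (σ I.set / ENNReal.ofReal I.vol) ^ (1 - 1 / p)) J

theorem rpow_mul_average_le (hp : 1 ≤ p) {E : Set (Fin n → ℝ)} (J : Cube n) {a b : ℝ≥0∞}
    (hω : ω E ≤ a * ω J.set) (hσ : σ J.set ≤ b * σ E) :
    ω E ^ (1 / p) * (σ J.set / ENNReal.ofReal J.vol) ≤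
      (a * b) ^ (1 / p) * Ap p ω σ * σ E ^ (1 / p) := by
  have hs₀ : 0 ≤ 1 / p := by positivity
  calc ω E ^ (1 / p) * (σ J.set / ENNReal.ofReal J.vol)
      ≤ a ^ (1 / p) * (ω J.set ^ (1 / p) * (σ J.set / ENNReal.ofReal J.vol)) := by
        rw [← mul_assoc, ← ENNReal.mul_rpow_of_nonneg _ _ hs₀]
        gcongr
    _ ≤ a ^ (1 / p) * (Ap p ω σ * (b * σ E) ^ (1 / p)) :=
        mul_le_mul_right ((rpow_mul_average_le_Ap hp J).trans (by gcongr)) _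
    _ = (a * b) ^ (1 / p) * Ap p ω σ * σ E ^ (1 / p) := by
        simp only [ENNReal.mul_rpow_of_nonneg _ _ hs₀]; ring

end Weights

section Doubling

variable {n : ℕ} {μ : Measure (Fin n → ℝ)} {c : ℝ≥0∞}

theorem measure_iterate_double_le (h : ∀ I : Cube n, μ I.double.set ≤ c * μ I.set)
    (I : Cube n) (m : ℕ) : μ (Cube.double^[m] I).set ≤ c ^ m * μ I.set := by
  induction m with
  | zero => simp
  | succ m ih =>
    rw [Function.iterate_succ_apply', pow_succ', mul_assoc]
    exact (h _).trans (by gcongr)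

theorem measure_le_iterate_double (h : ∀ I : Cube n, μ I.set ≤ c * μ I.double.set)
    (I : Cube n) (m : ℕ) : μ I.set ≤ c ^ m * μ (Cube.double^[m] I).set := by
  induction m with
  | zero => simp
  | succ m ih =>
    rw [Function.iterate_succ_apply', pow_succ, mul_assoc]
    exact ih.trans (by gcongr; exact h _)

end Doubling

theorem mul_poisson_le_of_average_le {n : ℕ} (I : Cube n) (μ : Measure (Fin n → ℝ))
    {w S : ℝ≥0∞} {θ : ℝ} (hθ₀ : 0 ≤ θ) (hθ : θ < 2 ^ n)
    (h : ∀ m : ℕ,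
      w * (μ (Cube.double^[m + 1] I).set / ENNReal.ofReal (Cube.double^[m + 1] I).vol) ≤
        ENNReal.ofReal (θ ^ (m + 1)) * S) :
    w * poisson I μ ≤ ENNReal.ofReal (8 ^ n * θ / (1 - θ / 2 ^ n)) * S := by
  set ρ := θ / 2 ^ n
  have hρ₀ : 0 ≤ ρ := by positivity
  have hρ₁ : ρ < 1 := (div_lt_one (by positivity)).2 hθ
  have hcoeff : ∀ m : ℕ, (8 / 2 ^ m : ℝ) ^ n * θ ^ (m + 1) = 8 ^ n * θ * ρ ^ m := fun m => by
    simp only [ρ, div_pow, ← pow_mul]; ring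
  calc w * poisson I μ
      ≤ w * ∑' m : ℕ, ENNReal.ofReal ((8 / 2 ^ m) ^ n) *
          (μ (Cube.double^[m + 1] I).set / ENNReal.ofReal (Cube.double^[m + 1] I).vol) := by
        gcongr; exact poisson_le_tsum_average I μ
    _ = ∑' m : ℕ, ENNReal.ofReal ((8 / 2 ^ m) ^ n) *
          (w * (μ (Cube.double^[m + 1] I).set / ENNReal.ofReal (Cube.double^[m + 1] I).vol)) := by
        rw [← ENNReal.tsum_mul_left]; congr 1 with m; ring
    _ ≤ ∑' m : ℕ, ENNReal.ofReal ((8 / 2 ^ m) ^ n) * (ENNReal.ofReal (θ ^ (m + 1)) * S) :=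
        ENNReal.tsum_le_tsum fun m => mul_le_mul_right (h m) _
    _ = (∑' m : ℕ, ENNReal.ofReal (8 ^ n * θ * ρ ^ m)) * S := by
        rw [← ENNReal.tsum_mul_right]
        congr 1 with m
        rw [← mul_assoc, ← ENNReal.ofReal_mul (by positivity), hcoeff]
    _ = ENNReal.ofReal (8 ^ n * θ / (1 - ρ)) * S := by
        rw [← ENNReal.ofReal_tsum_of_nonneg (fun m => by positivity)
          ((summable_geometric_of_lt_one hρ₀ hρ₁).mul_left _), tsum_mul_left,
          tsum_geometric_of_lt_one hρ₀ hρ₁, div_eq_mul_inv]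

theorem exists_mul_poisson_rpow_le {n : ℕ} (hn : 0 < n) {p : ℝ} (hp : 1 < p)
    {ω σ : Measure (Fin n → ℝ)} {K δ : ℝ} (hK : 0 < K) (hδ : 0 < δ)
    (hdσ : ∀ I : Cube n, σ I.double.set ≤ ENNReal.ofReal K * σ I.set)
    (hrω : ∀ I : Cube n, ENNReal.ofReal (1 + δ) * ω I.set ≤ ω I.double.set)
    (hsmall : K < 2 ^ p * (1 + δ)) :
    ∃ C : ℝ≥0∞, C ≠ ∞ ∧ ∀ I : Cube n,
      ω I.set * poisson I σ ^ p ≤ C * Ap p ω σ ^ p * σ I.set := by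
  have hp₀ : 0 < p := by linarith
  set θ := (K / (1 + δ)) ^ (1 / p) with hθ_def
  have hθ₀ : 0 ≤ θ := by positivity
  have hθ : θ < 2 ^ n := calc
    θ < 2 := by
      rw [hθ_def, one_div, Real.rpow_inv_lt_iff_of_pos (by positivity) zero_le_two hp₀,
        div_lt_iff₀ (by linarith)]
      exact hsmall
    _ ≤ 2 ^ n := le_self_pow₀ one_le_two hn.ne'
  have hω : ∀ I : Cube n, ω I.set ≤ (ENNReal.ofReal (1 + δ))⁻¹ * ω I.double.set := fun I =>
    (ENNReal.mul_le_iff_le_inv (by simp; linarith) ENNReal.ofReal_ne_top).1 (hrω I)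
  have hscalar : ∀ m : ℕ,
      ((ENNReal.ofReal (1 + δ))⁻¹ ^ m * ENNReal.ofReal K ^ m) ^ (1 / p) =
        ENNReal.ofReal (θ ^ m) := by
    intro m
    rw [← ENNReal.ofReal_inv_of_pos (by linarith), ← mul_pow,
      ← ENNReal.ofReal_mul (by positivity), ← ENNReal.ofReal_pow (by positivity),
      ENNReal.ofReal_rpow_of_nonneg (by positivity) (by positivity),
      Real.rpow_pow_comm (by positivity), inv_mul_eq_div]
  set c := 8 ^ n * θ / (1 - θ / 2 ^ n)
  refine ⟨ENNReal.ofReal c ^ p, by finiteness, fun I => ?_⟩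
  have key :
      ω I.set ^ (1 / p) * poisson I σ ≤ ENNReal.ofReal c * (Ap p ω σ * σ I.set ^ (1 / p)) :=
    mul_poisson_le_of_average_le I σ hθ₀ hθ fun m =>
      (rpow_mul_average_le hp.le _ (measure_le_iterate_double hω I (m + 1))
        (measure_iterate_double_le hdσ I (m + 1))).trans_eq (by rw [hscalar, mul_assoc])
  have hpow : ∀ x : ℝ≥0∞, (x ^ (1 / p)) ^ p = x := fun x => by
    rw [one_div, ENNReal.rpow_inv_rpow hp₀.ne']
  calc ω I.set * poisson I σ ^ p = (ω I.set ^ (1 / p) * poisson I σ) ^ p := by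
        rw [ENNReal.mul_rpow_of_nonneg _ _ hp₀.le, hpow]
    _ ≤ (ENNReal.ofReal c * (Ap p ω σ * σ I.set ^ (1 / p))) ^ p := by gcongr
    _ = ENNReal.ofReal c ^ p * Ap p ω σ ^ p * σ I.set := by
        simp only [ENNReal.mul_rpow_of_nonneg _ _ hp₀.le, hpow, mul_assoc]

theorem ENNReal.exists_mul_rpow_le {c : ℝ≥0∞} (hc : c ≠ ∞) {p : ℝ} (hp : 1 ≤ p) (A : ℝ≥0∞) :
    ∃ C > (0 : ℝ), c * A ^ p ≤ ENNReal.ofReal C * A := by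
  rcases eq_or_ne A ∞ with rfl | hA
  · exact ⟨1, one_pos, by simp⟩
  have hcA : c * A ^ (p - 1) ≠ ∞ := by finiteness
  refine ⟨(c * A ^ (p - 1)).toReal + 1, by positivity, ?_⟩
  calc c * A ^ p = c * A ^ (p - 1 + 1) := by rw [sub_add_cancel]
    _ = c * A ^ (p - 1) * A := by
        rw [ENNReal.rpow_add_of_nonneg _ _ (by linarith) zero_le_one, ENNReal.rpow_one, mul_assoc]
    _ ≤ ENNReal.ofReal ((c * A ^ (p - 1)).toReal + 1) * A := by
        gcongr
        rw [← ENNReal.ofReal_toReal hcA]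
        exact ENNReal.ofReal_le_ofReal (by simp)

theorem stmt_13_general (n : ℕ) (hn : 0 < n) (p : ℝ) (hp : 1 < p)
    (ω σ : Measure (Fin n → ℝ))
    (Kσ δω : ℝ) (hKσ : 0 < Kσ) (hδω : 0 < δω)
    (hdσ : ∀ I : Cube n, σ I.double.set ≤ ENNReal.ofReal Kσ * σ I.set)
    (hrω : ∀ I : Cube n, ENNReal.ofReal (1 + δω) * ω I.set ≤ ω I.double.set)
    (hsmall : Kσ < (2:ℝ) ^ p * (1 + δω)) :
    ∃ C > (0:ℝ), ∀ I₀ : Cube n, ∀ Ir : ℕ → Cube n,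
      (Pairwise fun r s => Disjoint (Ir r).set (Ir s).set) →
      (⋃ r, (Ir r).set) = I₀.set →
      ∑' r, ω (Ir r).set * (poisson (Ir r) (σ.restrict I₀.set)) ^ p ≤
        ENNReal.ofReal C * Ap p ω σ * σ I₀.set := by
  obtain ⟨c, hc, hcube⟩ := exists_mul_poisson_rpow_le hn hp hKσ hδω hdσ hrω hsmall
  obtain ⟨C, hC, hcC⟩ := ENNReal.exists_mul_rpow_le hc hp.le (Ap p ω σ)
  refine ⟨C, hC, fun I₀ Ir hdisj hunion => ?_⟩
  calc ∑' r, ω (Ir r).set * poisson (Ir r) (σ.restrict I₀.set) ^ p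
      ≤ ∑' r, c * Ap p ω σ ^ p * σ (Ir r).set := ENNReal.tsum_le_tsum fun r =>
        (mul_le_mul_right (ENNReal.rpow_le_rpow
          (lintegral_mono' Measure.restrict_le_self le_rfl) (by linarith)) _).trans (hcube (Ir r))
    _ = c * Ap p ω σ ^ p * σ I₀.set := by
        rw [ENNReal.tsum_mul_left, ← measure_iUnion hdisj fun r => (Ir r).measurableSet_set, hunion]
    _ ≤ ENNReal.ofReal C * Ap p ω σ * σ I₀.set := by gcongr

/-- If `ω, σ` are doubling with doubling constants `K_ω, K_σ` and reverse
doubling constants `1+δ_ω, 1+δ_σ`, and `K_σ < 2^p (1+δ_ω)`, then the classical `A_p(ω,σ)`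
characteristic controls the pivotal condition. -/
theorem stmt_13 (n : ℕ) (hn : 0 < n) (p : ℝ) (hp : 1 < p)
    (ω σ : Measure (Fin n → ℝ)) [IsLocallyFiniteMeasure ω] [IsLocallyFiniteMeasure σ]
    (Kω Kσ δω δσ : ℝ) (hKω : 0 < Kω) (hKσ : 0 < Kσ) (hδω : 0 < δω) (hδσ : 0 < δσ)
    (hdω : ∀ I : Cube n, ω I.double.set ≤ ENNReal.ofReal Kω * ω I.set)
    (hdσ : ∀ I : Cube n, σ I.double.set ≤ ENNReal.ofReal Kσ * σ I.set)
    (hrω : ∀ I : Cube n, ENNReal.ofReal (1 + δω) * ω I.set ≤ ω I.double.set)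
    (hrσ : ∀ I : Cube n, ENNReal.ofReal (1 + δσ) * σ I.set ≤ σ I.double.set)
    (hsmall : Kσ < (2:ℝ) ^ p * (1 + δω)) :
    ∃ C > (0:ℝ), ∀ I₀ : Cube n, ∀ Ir : ℕ → Cube n,
      (Pairwise fun r s => Disjoint (Ir r).set (Ir s).set) →
      (⋃ r, (Ir r).set) = I₀.set →
      ∑' r, ω (Ir r).set * (poisson (Ir r) (σ.restrict I₀.set)) ^ p ≤
        ENNReal.ofReal C * Ap p ω σ * σ I₀.set :=
  stmt_13_general n hn p hp ω σ Kσ δω hKσ hδω hdσ hrω hsmall
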